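/- For a, t > 0, the integral I = integral_a^infinity x * exp(-(1/2)(a - x)^2 - x^2/(2t)) dx equals a * sqrt(pi t^3 / (2 (t+1)^3)) * exp(-a^2/(2(t+1))) * erfc(a / sqrt(2 t (t+1))) + (t/(t+1)) * exp(-a^2/(2t)). -/

import Mathlib

open MeasureTheory Real

/-- The complementary error function. -/
noncomputable def erfc (x : ℝ) : ℝ :=
  1 - (2 / Real.sqrt Real.pi) * ∫ u in (0 : ℝ)..x, Real.exp (-u ^ 2)

/-!
Completing the square, the exponent is `-a²/(2(t+1)) - b (x - m)²` with `b = (t+1)/(2t)` and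
`m = at/(t+1)`. Writing `x = (x - m) + m`, the first part integrates exactly since
`(x - m) e^{-b(x-m)²}` is a derivative, and the second is a Gaussian tail, i.e. an `erfc` value.
-/

open Filter Topology

theorem integral_Ioi_exp_neg_sq (L : ℝ) :
    ∫ u in Set.Ioi L, exp (-u ^ 2) = √π / 2 * erfc L := by
  have hint : ∀ c : ℝ, IntegrableOn (fun u : ℝ => exp (-u ^ 2)) (Set.Ioi c) := fun c => by
    simpa using (integrable_exp_neg_mul_sq one_pos).integrableOn
  have hsplit := intervalIntegral.integral_Ioi_sub_Ioi' (hint 0) (hint L)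
  have hhalf : ∫ u in Set.Ioi (0 : ℝ), exp (-u ^ 2) = √π / 2 := by
    simpa using integral_gaussian_Ioi 1
  rw [erfc]
  field_simp
  linarith

theorem integral_Ioi_comp_sub_right {E : Type*} [NormedAddCommGroup E] [NormedSpace ℝ E]
    (g : ℝ → E) (a m : ℝ) :
    ∫ x in Set.Ioi a, g (x - m) = ∫ y in Set.Ioi (a - m), g y := by
  have h := (measurePreserving_sub_right (volume : Measure ℝ) m).setIntegral_preimage_emb
    (Homeomorph.subRight m).measurableEmbedding g (Set.Ioi (a - m))
  rwa [show (· - m) ⁻¹' Set.Ioi (a - m) = Set.Ioi a by ext; simp] at h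

theorem integral_Ioi_exp_neg_mul_sub_sq {b : ℝ} (hb : 0 < b) (a m : ℝ) :
    ∫ x in Set.Ioi a, exp (-b * (x - m) ^ 2) = √π / (2 * √b) * erfc (√b * (a - m)) := by
  have hscale : ∀ y : ℝ, exp (-b * y ^ 2) = exp (-(√b * y) ^ 2) := fun y => by
    rw [mul_pow, sq_sqrt hb.le, neg_mul]
  simp_rw [integral_Ioi_comp_sub_right (fun y => exp (-b * y ^ 2)), hscale,
    integral_comp_mul_left_Ioi (fun u => exp (-u ^ 2)) _ (sqrt_pos.mpr hb),
    integral_Ioi_exp_neg_sq, smul_eq_mul]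
  ring

theorem integral_Ioi_sub_mul_exp_neg_mul_sub_sq {b : ℝ} (hb : 0 < b) (a m : ℝ) :
    ∫ x in Set.Ioi a, (x - m) * exp (-b * (x - m) ^ 2) = exp (-b * (a - m) ^ 2) / (2 * b) := by
  have hderiv : ∀ x ∈ Set.Ici a, HasDerivAt (fun x => -exp (-b * (x - m) ^ 2) / (2 * b))
      ((x - m) * exp (-b * (x - m) ^ 2)) x := by
    intro x _
    have hinner : HasDerivAt (fun x => -b * (x - m) ^ 2) (-b * (2 * (x - m))) x := by
      simpa using (((hasDerivAt_id x).sub_const m).pow 2).const_mul (-b)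
    exact (hinner.exp.neg.div_const (2 * b)).congr_deriv (by field_simp)
  have hlim : Tendsto (fun x => -exp (-b * (x - m) ^ 2) / (2 * b)) atTop (𝓝 0) := by
    have hsq : Tendsto (fun x : ℝ => (x - m) ^ 2) atTop atTop :=
      (tendsto_pow_atTop two_ne_zero).comp (tendsto_atTop_add_const_right _ _ tendsto_id)
    simpa using (tendsto_exp_atBot.comp
      ((tendsto_const_mul_atBot_of_neg (neg_neg_of_pos hb)).mpr hsq)).neg.div_const (2 * b)
  have hint : IntegrableOn (fun x => (x - m) * exp (-b * (x - m) ^ 2)) (Set.Ioi a) :=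
    ((integrable_mul_exp_neg_mul_sq hb).comp_sub_right m).integrableOn
  rw [integral_Ioi_of_hasDerivAt_of_tendsto' hderiv hint hlim]
  ring

theorem integral_Ioi_mul_exp_neg_mul_sub_sq {b : ℝ} (hb : 0 < b) (a m : ℝ) :
    ∫ x in Set.Ioi a, x * exp (-b * (x - m) ^ 2)
      = exp (-b * (a - m) ^ 2) / (2 * b) + m * (√π / (2 * √b)) * erfc (√b * (a - m)) := by
  have hsplit : ∀ x : ℝ, x * exp (-b * (x - m) ^ 2)
      = (x - m) * exp (-b * (x - m) ^ 2) + m * exp (-b * (x - m) ^ 2) := fun x => by ring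
  simp_rw [hsplit]
  rw [integral_add ((integrable_mul_exp_neg_mul_sq hb).comp_sub_right m).integrableOn
      (((integrable_exp_neg_mul_sq hb).comp_sub_right m).integrableOn.const_mul m),
    integral_const_mul, integral_Ioi_sub_mul_exp_neg_mul_sub_sq hb,
    integral_Ioi_exp_neg_mul_sub_sq hb]
  ring

theorem neg_half_sub_sq_sub_sq_div_eq (a x : ℝ) {t : ℝ} (ht : 0 < t) :
    -(1 / 2) * (a - x) ^ 2 - x ^ 2 / (2 * t)
      = -a ^ 2 / (2 * (t + 1)) + -((t + 1) / (2 * t)) * (x - a * t / (t + 1)) ^ 2 := by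
  field_simp
  ring

theorem gaussian_integral_I (a t : ℝ) (ha : 0 < a) (ht : 0 < t) :
    ∫ x in Set.Ioi a, x * Real.exp (-(1 / 2) * (a - x) ^ 2 - x ^ 2 / (2 * t))
      = a * Real.sqrt (Real.pi * t ^ 3 / (2 * (t + 1) ^ 3))
          * Real.exp (-a ^ 2 / (2 * (t + 1)))
          * erfc (a / Real.sqrt (2 * t * (t + 1)))
        + (t / (t + 1)) * Real.exp (-a ^ 2 / (2 * t)) := by
  set b := (t + 1) / (2 * t) with hb_def
  set m := a * t / (t + 1) with hm_def
  have hb : 0 < b := by positivity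
  have hexp : exp (-a ^ 2 / (2 * (t + 1))) * exp (-b * (a - m) ^ 2) = exp (-a ^ 2 / (2 * t)) := by
    rw [← exp_add, hb_def, hm_def]
    congr 1
    field_simp
    ring
  have hfrac : 1 / (2 * b) = t / (t + 1) := by
    rw [hb_def]
    field_simp
  have hcoef : m * (√π / (2 * √b)) = a * √(π * t ^ 3 / (2 * (t + 1) ^ 3)) := by
    rw [← sq_eq_sq₀ (by positivity) (by positivity)]
    simp only [mul_pow, div_pow, sq_sqrt pi_pos.le, sq_sqrt hb.le,
      sq_sqrt (by positivity : 0 ≤ π * t ^ 3 / (2 * (t + 1) ^ 3))]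
    rw [hb_def, hm_def]
    field_simp
  have harg : √b * (a - m) = a / √(2 * t * (t + 1)) := by
    have ham : a - m = a / (t + 1) := by rw [hm_def]; field_simp; ring
    rw [ham, ← sq_eq_sq₀ (by positivity) (by positivity)]
    simp only [mul_pow, div_pow, sq_sqrt hb.le, sq_sqrt (by positivity : 0 ≤ 2 * t * (t + 1))]
    rw [hb_def]
    field_simp
  calc ∫ x in Set.Ioi a, x * exp (-(1 / 2) * (a - x) ^ 2 - x ^ 2 / (2 * t))
      = ∫ x in Set.Ioi a, exp (-a ^ 2 / (2 * (t + 1))) * (x * exp (-b * (x - m) ^ 2)) := by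
        refine setIntegral_congr_fun measurableSet_Ioi fun x _ => ?_
        rw [neg_half_sub_sq_sub_sq_div_eq a x ht, exp_add]
        ring
    _ = _ := by
        rw [integral_const_mul, integral_Ioi_mul_exp_neg_mul_sub_sq hb,
          ← harg, ← hcoef, ← hexp, ← hfrac]
        ring
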